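/- arXiv:2108.08212 — 8 statements merged into one kernel-verified Lean document; each statement's English description precedes it below -/
import Mathlib

section
/- If q_j = 1 (the labeled class), the gradient of the confidence adaptive loss with respect to logit z_j equals (p_j - 1)·p_j/(p_j - 1 + 1/τ), and this quantity is nonpositive for p_j ∈ [0,1] and τ ∈ (0,1). -/
noncomputable def smax {K : ℕ} (z : Fin K → ℝ) (k : Fin K) : ℝ :=
  Real.exp (z k) / ∑ j, Real.exp (z j)

noncomputable def LCAL {K : ℕ} (y : Fin K) (τ lam : ℝ) (z : Fin K → ℝ) : ℝ :=
  -∑ k, (if k = y then (1:ℝ) else 0) *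
      Real.log (τ * (smax z k - (if k = y then (1:ℝ) else 0)) + (if k = y then (1:ℝ) else 0))
    - lam * Real.log τ

theorem grad_LCAL_true_class {K : ℕ} (y j : Fin K) (z : Fin K → ℝ) (τ lam : ℝ)
    (hτ : τ ∈ Set.Ioo (0:ℝ) 1) (hj : j = y) :
    HasDerivAt (fun t => LCAL y τ lam (Function.update z j t))
      ((smax z j - 1) * smax z j / (smax z j - 1 + 1/τ)) (z j)
    ∧ ∀ pj ∈ Set.Icc (0:ℝ) 1, (pj - 1) * pj / (pj - 1 + 1/τ) ≤ 0 := by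
  obtain ⟨hτ0, hτ1⟩ := hτ
  constructor
  · subst hj
    set S : ℝ := ∑ k ∈ Finset.univ.erase j, Real.exp (z k) with hS
    have hSnn : 0 ≤ S := Finset.sum_nonneg fun k _ => (Real.exp_pos _).le
    have hsum : ∀ t : ℝ, ∑ k, Real.exp (Function.update z j t k) = Real.exp t + S := by
      intro t
      rw [← Finset.add_sum_erase _ _ (Finset.mem_univ j)]
      congr 1
      · simp
      · apply Finset.sum_congr rfl
        intro k hk
        rw [Function.update_of_ne (Finset.ne_of_mem_erase hk)]
    have hL : ∀ t : ℝ, LCAL j τ lam (Function.update z j t)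
        = -Real.log (τ * (Real.exp t / (Real.exp t + S) - 1) + 1) - lam * Real.log τ := by
      intro t
      unfold LCAL
      congr 1
      rw [neg_inj]
      rw [Finset.sum_eq_single j]
      · simp [smax, hsum t, Function.update_self]
      · intro k _ hk; simp [hk]
      · simp
    have hden : ∀ t : ℝ, Real.exp t + S ≠ 0 := fun t =>
      ne_of_gt (by positivity)
    -- derivative of p(t) = exp t / (exp t + S)
    set t0 := z j
    set p : ℝ := smax z j with hp
    have hpval : p = Real.exp t0 / (Real.exp t0 + S) := by
      simp [hp, smax, ← hsum t0, t0, Function.update_eq_self]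
    have hp_deriv : HasDerivAt (fun t => Real.exp t / (Real.exp t + S)) (p * (1 - p)) t0 := by
      have h1 : HasDerivAt (fun t => Real.exp t / (Real.exp t + S))
          ((Real.exp t0 * (Real.exp t0 + S) - Real.exp t0 * Real.exp t0) / (Real.exp t0 + S) ^ 2)
          t0 := (Real.hasDerivAt_exp t0).div
        (((Real.hasDerivAt_exp t0).add_const S)) (hden t0)
      convert h1 using 1
      rw [hpval]
      field_simp
    have hppos : 0 < p := by
      rw [hpval]; positivity
    have hple : p ≤ 1 := by
      rw [hpval]
      rw [div_le_one (by positivity)]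
      linarith
    have harg : τ * (p - 1) + 1 > 0 := by nlinarith
    have hlog : HasDerivAt (fun t => τ * (Real.exp t / (Real.exp t + S) - 1) + 1)
        (τ * (p * (1 - p))) t0 :=
      (((hp_deriv.sub_const 1).const_mul τ).add_const 1)
    have hmain : HasDerivAt (fun t => -Real.log (τ * (Real.exp t / (Real.exp t + S) - 1) + 1)
        - lam * Real.log τ)
        ((p - 1) * p / (p - 1 + 1/τ)) t0 := by
      have h2 := ((hlog.log (by simpa [hpval] using ne_of_gt harg)).neg).sub_const (lam * Real.log τ)
      rw [← hpval] at h2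
      refine h2.congr_deriv (Eq.symm ?_)
      have hτne : τ ≠ 0 := ne_of_gt hτ0
      have hne : τ * (p - 1) + 1 ≠ 0 := ne_of_gt harg
      have h : p - 1 + 1/τ = (τ * (p - 1) + 1) / τ := by field_simp
      rw [h, div_div_eq_mul_div, ← neg_div]
      congr 1
      ring
    exact hmain.congr_of_eventuallyEq (Filter.Eventually.of_forall fun t => (hL t))
  · intro pj ⟨h0, h1⟩
    apply div_nonpos_of_nonpos_of_nonneg
    · nlinarith
    · have : 1 < 1/τ := by rw [lt_div_iff₀ hτ0]; linarith
      linarith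
end

section
/- If q_j = 0 (an unlabeled class) and y is the labeled class (q_y = 1), the gradient of the confidence adaptive loss with respect to logit z_j equals p_j·p_y/(p_y - 1 + 1/τ), which is nonnegative for p_j, p_y ∈ [0,1] and τ ∈ (0,1). -/
theorem grad_LCAL_other_class {K : ℕ} (y j : Fin K) (z : Fin K → ℝ) (τ lam : ℝ)
    (hτ : τ ∈ Set.Ioo (0:ℝ) 1) (hj : j ≠ y) :
    HasDerivAt (fun t => LCAL y τ lam (Function.update z j t))
      (smax z j * smax z y / (smax z y - 1 + 1/τ)) (z j)
    ∧ ∀ pj ∈ Set.Icc (0:ℝ) 1, ∀ py ∈ Set.Icc (0:ℝ) 1,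
        0 ≤ pj * py / (py - 1 + 1/τ) := by
  obtain ⟨hτ0, hτ1⟩ := hτ
  have hτinv : 1 < 1/τ := (one_lt_one_div hτ0 hτ1)
  constructor
  · set A := Real.exp (z y) with hA
    set B := ∑ k ∈ Finset.univ.erase j, Real.exp (z k) with hB
    have hApos : 0 < A := Real.exp_pos _
    have hAle : A ≤ B := by
      apply Finset.single_le_sum (f := fun k => Real.exp (z k))
        (fun k _ => (Real.exp_pos _).le)
      exact Finset.mem_erase.2 ⟨(Ne.symm hj), Finset.mem_univ _⟩
    -- rewrite the function
    have hsum : ∀ t : ℝ, (∑ k, Real.exp (Function.update z j t k))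
        = B + Real.exp t := by
      intro t
      rw [← Finset.add_sum_erase _ _ (Finset.mem_univ j), Function.update_self]
      rw [add_comm]
      congr 1
      apply Finset.sum_congr rfl
      intro k hk
      rw [Function.update_of_ne (Finset.mem_erase.1 hk).1]
    have hsmax : ∀ t : ℝ, smax (Function.update z j t) y = A / (B + Real.exp t) := by
      intro t
      unfold smax
      rw [hsum t, Function.update_of_ne (Ne.symm hj)]
    have key : ∀ t : ℝ, LCAL y τ lam (Function.update z j t)
        = -Real.log (τ * (A / (B + Real.exp t) - 1) + 1) - lam * Real.log τ := by
      intro t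
      unfold LCAL
      congr 2
      rw [Finset.sum_eq_single y]
      · simp [hsmax t]
      · intro k _ hk; simp [hk]
      · intro h; exact absurd (Finset.mem_univ y) h
    have hfun : (fun t => LCAL y τ lam (Function.update z j t))
        = fun t => -Real.log (τ * (A / (B + Real.exp t) - 1) + 1) - lam * Real.log τ :=
      funext key
    rw [hfun]
    set ej := Real.exp (z j) with hej
    have hejpos : 0 < ej := Real.exp_pos _
    have hSpos : 0 < B + ej := by positivity
    have hSne : (B + ej) ≠ 0 := ne_of_gt hSpos
    have h1 : HasDerivAt (fun t => B + Real.exp t) ej (z j) :=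
      (Real.hasDerivAt_exp _).const_add B
    have h2 : HasDerivAt (fun t => A / (B + Real.exp t))
        ((0 * (B + ej) - A * ej) / (B + ej)^2) (z j) :=
      (hasDerivAt_const _ A).div h1 hSne
    have h3 : HasDerivAt (fun t => τ * (A / (B + Real.exp t) - 1) + 1)
        (τ * ((0 * (B + ej) - A * ej) / (B + ej)^2)) (z j) :=
      ((h2.sub_const 1).const_mul τ).add_const 1
    have hinnerpos : 0 < τ * (A / (B + ej) - 1) + 1 := by
      have hfrac0 : 0 < A / (B + ej) := by positivity
      nlinarith [hfrac0]
    have h4 : HasDerivAt (fun t => -Real.log (τ * (A / (B + Real.exp t) - 1) + 1)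
        - lam * Real.log τ)
        (-(τ * ((0 * (B + ej) - A * ej) / (B + ej)^2) / (τ * (A / (B + ej) - 1) + 1)))
        (z j) :=
      ((h3.log (ne_of_gt hinnerpos)).neg).sub_const _
    convert h4 using 1
    unfold smax
    have hS : (∑ k, Real.exp (z k)) = B + ej := by
      rw [← Finset.add_sum_erase _ _ (Finset.mem_univ j), add_comm]
    rw [hS]
    have hdenpos : 0 < A / (B + ej) - 1 + 1/τ := by
      have hfrac0 : 0 < A / (B + ej) := by positivity
      linarith
    rw [show Real.exp (z j) = ej from rfl, show Real.exp (z y) = A from rfl]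
    clear hfun key hsum hsmax h1 h2 h3 h4 hS
    clear_value A B ej
    have hine : τ * (A / (B + ej) - 1) + 1 ≠ 0 := ne_of_gt hinnerpos
    have hdne : A / (B + ej) - 1 + 1/τ ≠ 0 := ne_of_gt hdenpos
    have hτne : τ ≠ 0 := ne_of_gt hτ0
    field_simp
    ring
  · intro pj hpj py hpy
    apply div_nonneg (mul_nonneg hpj.1 hpy.1)
    linarith [hpy.1]
end

section
/- If q_j = 1, the gradient of L_CAR = L_CAL + L_{r-cace} with respect to logit z_j equals (p_j - 1)·p_j/(p_j - 1 + 1/τ) - Aτp_j(p_j - 1), and this is nonpositive for p_j ∈ [0,1], τ ∈ (0,1), and any negative constant A. -/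
noncomputable def logA (A x : ℝ) : ℝ := if x = 0 then A else Real.log x

noncomputable def LRC {K : ℕ} (y : Fin K) (A τ : ℝ) (z : Fin K → ℝ) : ℝ :=
  -∑ k, (τ * (smax z k - (if k = y then (1:ℝ) else 0)) + (if k = y then (1:ℝ) else 0)) *
      logA A (if k = y then (1:ℝ) else 0)

lemma grad_aux (E Cv τ A : ℝ) (hE : 0 < E) (hC : 0 ≤ Cv) (hτ0 : 0 < τ) (hτ1 : τ < 1) :
    (E/(E+Cv) - 1) * (E/(E+Cv)) / (E/(E+Cv) - 1 + 1/τ) - A * τ * (E/(E+Cv)) * (E/(E+Cv) - 1)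
    = -(τ * ((E*(E+Cv) - E*E)/(E+Cv)^2) / (τ*(E/(E+Cv) - 1)+1))
      - τ*A*((0*(E+Cv) - Cv*E)/(E+Cv)^2) := by
  have hS : 0 < E + Cv := by linarith
  have hle : E/(E+Cv) ≤ 1 := by rw [div_le_one hS]; linarith
  have hgt : 0 < E/(E+Cv) := div_pos hE hS
  have hinv : 1 < 1/τ := by rw [lt_div_iff₀ hτ0]; linarith
  have h1 : τ*(E/(E+Cv) - 1)+1 ≠ 0 := by nlinarith
  have h2 : E/(E+Cv) - 1 + 1/τ ≠ 0 := by
    have : 0 < E/(E+Cv) - 1 + 1/τ := by linarith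
    linarith
  field_simp
  ring

theorem grad_LCAR_true_class {K : ℕ} (y j : Fin K) (z : Fin K → ℝ) (τ lam A : ℝ)
    (hτ : τ ∈ Set.Ioo (0:ℝ) 1) (hA : A < 0) (hj : j = y) :
    HasDerivAt (fun t => LCAL y τ lam (Function.update z j t) + LRC y A τ (Function.update z j t))
      ((smax z j - 1) * smax z j / (smax z j - 1 + 1/τ) - A * τ * smax z j * (smax z j - 1))
      (z j)
    ∧ ∀ pj ∈ Set.Icc (0:ℝ) 1,
        (pj - 1) * pj / (pj - 1 + 1/τ) - A * τ * pj * (pj - 1) ≤ 0 := by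
  obtain ⟨hτ0, hτ1⟩ := hτ
  constructor
  · subst hj
    set C : ℝ := ∑ k ∈ Finset.univ.erase j, Real.exp (z k) with hCdef
    have hC0 : 0 ≤ C := Finset.sum_nonneg fun k _ => (Real.exp_pos _).le
    have hS : ∀ t : ℝ, 0 < Real.exp t + C := fun t => by positivity
    have hsum : ∀ t : ℝ, ∑ k, Real.exp (Function.update z j t k) = Real.exp t + C := by
      intro t
      have hupd : ∀ k, Real.exp (Function.update z j t k)
          = Function.update (fun k => Real.exp (z k)) j (Real.exp t) k := fun k =>
        Function.apply_update (fun _ x => Real.exp x) z j t k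
      simp only [hupd]
      rw [Finset.sum_update_of_mem (Finset.mem_univ j), hCdef, Finset.erase_eq]
    have hsz : ∑ k, Real.exp (z k) = Real.exp (z j) + C := by
      have := hsum (z j)
      simpa [Function.update_eq_self] using this
    -- closed form of the loss along the update line
    have hfun : ∀ t : ℝ,
        LCAL j τ lam (Function.update z j t) + LRC j A τ (Function.update z j t)
        = -Real.log (τ * (Real.exp t / (Real.exp t + C) - 1) + 1) - lam * Real.log τ
          - τ * A * (C / (Real.exp t + C)) := by
      intro t
      have hCAL : LCAL j τ lam (Function.update z j t)
          = -Real.log (τ * (Real.exp t / (Real.exp t + C) - 1) + 1) - lam * Real.log τ := by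
        unfold LCAL
        congr 1
        congr 1
        rw [Finset.sum_eq_single j]
        · simp [smax, hsum t]
        · intro k _ hk; simp [hk]
        · intro h; exact absurd (Finset.mem_univ j) h
      have hRC : LRC j A τ (Function.update z j t)
          = -(τ * A * (C / (Real.exp t + C))) := by
        unfold LRC
        rw [← Finset.add_sum_erase _ _ (Finset.mem_univ j)]
        have hjterm : (τ * (smax (Function.update z j t) j - (if j = j then (1:ℝ) else 0))
            + (if j = j then (1:ℝ) else 0)) * logA A (if j = j then (1:ℝ) else 0) = 0 := by
          simp [logA]
        rw [hjterm, zero_add]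
        have hterm : ∀ k ∈ Finset.univ.erase j,
            (τ * (smax (Function.update z j t) k - (if k = j then (1:ℝ) else 0))
              + (if k = j then (1:ℝ) else 0)) * logA A (if k = j then (1:ℝ) else 0)
            = Real.exp (z k) * (τ * A / (Real.exp t + C)) := by
          intro k hk
          have hkj : k ≠ j := Finset.ne_of_mem_erase hk
          simp only [hkj, if_neg hkj, logA, if_pos rfl, sub_zero, add_zero, smax, hsum t,
            Function.update_of_ne hkj, if_false, if_true]
          field_simp
        rw [Finset.sum_congr rfl hterm, ← Finset.sum_mul, ← hCdef]
        ring
      rw [hCAL, hRC]; ring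
    have hfeq : (fun t => LCAL j τ lam (Function.update z j t)
        + LRC j A τ (Function.update z j t))
        = fun t => -Real.log (τ * (Real.exp t / (Real.exp t + C) - 1) + 1) - lam * Real.log τ
          - τ * A * (C / (Real.exp t + C)) := funext hfun
    rw [hfeq]
    set x := z j with hx
    have hSx : (0:ℝ) < Real.exp x + C := hS x
    have hSd : HasDerivAt (fun t => Real.exp t + C) (Real.exp x) x :=
      (Real.hasDerivAt_exp x).add_const C
    have hp : HasDerivAt (fun t => Real.exp t / (Real.exp t + C))
        ((Real.exp x * (Real.exp x + C) - Real.exp x * Real.exp x) / (Real.exp x + C) ^ 2) x :=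
      (Real.hasDerivAt_exp x).div hSd hSx.ne'
    have hu : HasDerivAt (fun t => τ * (Real.exp t / (Real.exp t + C) - 1) + 1)
        (τ * ((Real.exp x * (Real.exp x + C) - Real.exp x * Real.exp x) / (Real.exp x + C) ^ 2)) x :=
      ((hp.sub_const 1).const_mul τ).add_const 1
    -- positivity of the log argument
    have hp1 : Real.exp x / (Real.exp x + C) ≤ 1 := by
      rw [div_le_one hSx]; linarith [hC0]
    have hp0 : 0 < Real.exp x / (Real.exp x + C) := div_pos (Real.exp_pos x) hSx
    have hune : τ * (Real.exp x / (Real.exp x + C) - 1) + 1 ≠ 0 := by nlinarith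
    have hupos : 0 < τ * (Real.exp x / (Real.exp x + C) - 1) + 1 := by nlinarith
    have hlog := hu.log hune
    have h2 : HasDerivAt (fun t => C / (Real.exp t + C))
        ((0 * (Real.exp x + C) - C * Real.exp x) / (Real.exp x + C) ^ 2) x :=
      (hasDerivAt_const x C).div hSd hSx.ne'
    have hder := ((hlog.neg).sub_const (lam * Real.log τ)).sub (h2.const_mul (τ * A))
    have hsmax : smax z j = Real.exp x / (Real.exp x + C) := by
      unfold smax; rw [hsz]
    refine hder.congr_deriv ?_
    rw [hsmax]
    exact (grad_aux (Real.exp x) C τ A (Real.exp_pos x) hC0 hτ0 hτ1).symm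
  · intro pj hpj
    obtain ⟨hpj0, hpj1⟩ := hpj
    have hd : 0 < pj - 1 + 1/τ := by
      have h1 : 1 < 1/τ := by
        rw [lt_div_iff₀ hτ0]; linarith
      linarith
    have h1 : (pj - 1) * pj / (pj - 1 + 1/τ) ≤ 0 := by
      apply div_nonpos_of_nonpos_of_nonneg
      · nlinarith
      · exact hd.le
    have h2 : -(A * τ * pj * (pj - 1)) ≤ 0 := by
      nlinarith [mul_nonneg (mul_nonneg (neg_nonneg.mpr hA.le) hτ0.le) hpj0]
    linarith
end

section
/- If q_j = 0 and q_y = 1, the gradient of L_CAR with respect to logit z_j equals p_j·p_y/(p_y - 1 + 1/τ) - Aτp_jp_y, which is nonnegative for p_j, p_y ∈ [0,1], τ ∈ (0,1), and A < 0. -/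
lemma alg_aux (a b S τ A : ℝ) (hS : S ≠ 0) (hτ : τ ≠ 0)
    (hD : τ * (a / S - 1) + 1 ≠ 0) (hD2 : a / S - 1 + 1 / τ ≠ 0) :
    b / S * (a / S) / (a / S - 1 + 1 / τ) - A * τ * (b / S) * (a / S)
    = -(τ * ((0 * S - a * b) / S ^ 2) / (τ * (a / S - 1) + 1)) - A * τ * -((0 * S - a * b) / S ^ 2) := by
  field_simp
  ring

theorem grad_LCAR_other_class {K : ℕ} (y j : Fin K) (z : Fin K → ℝ) (τ lam A : ℝ)
    (hτ : τ ∈ Set.Ioo (0:ℝ) 1) (hA : A < 0) (hj : j ≠ y) :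
    HasDerivAt (fun t => LCAL y τ lam (Function.update z j t) + LRC y A τ (Function.update z j t))
      (smax z j * smax z y / (smax z y - 1 + 1/τ) - A * τ * smax z j * smax z y)
      (z j)
    ∧ ∀ pj ∈ Set.Icc (0:ℝ) 1, ∀ py ∈ Set.Icc (0:ℝ) 1,
        0 ≤ pj * py / (py - 1 + 1/τ) - A * τ * pj * py := by
  obtain ⟨hτ0, hτ1⟩ := hτ
  constructor
  · -- derivative part
    set C : ℝ := ∑ k ∈ Finset.univ.erase j, Real.exp (z k) with hCdef
    have hC : 0 ≤ C := Finset.sum_nonneg fun k _ => (Real.exp_pos _).le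
    have hS : ∀ t : ℝ, (∑ k, Real.exp (Function.update z j t k)) = Real.exp t + C := by
      intro t
      have h : ∀ k : Fin K, Real.exp (Function.update z j t k)
          = Function.update (fun k => Real.exp (z k)) j (Real.exp t) k := by
        intro k
        by_cases h : k = j
        · rw [h]; simp
        · simp [h]
      rw [Finset.sum_congr rfl (fun k _ => h k),
        Finset.sum_update_of_mem (Finset.mem_univ j), hCdef, Finset.erase_eq]
    have hSpos : ∀ t : ℝ, 0 < Real.exp t + C := fun t => by positivity
    have hEC : Real.exp (z j) + C = ∑ k, Real.exp (z k) := by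
      have h := hS (z j)
      rw [Function.update_eq_self] at h
      exact h.symm
    have hEy : Real.exp (z y) ≤ Real.exp (z j) + C := by
      rw [hEC]
      exact Finset.single_le_sum (fun k _ => (Real.exp_pos (z k)).le) (Finset.mem_univ y)
    -- explicit form of the loss
    have hfun : ∀ t : ℝ,
        LCAL y τ lam (Function.update z j t) + LRC y A τ (Function.update z j t)
        = -Real.log (τ * (Real.exp (z y) / (Real.exp t + C) - 1) + 1) - lam * Real.log τ
          - A * τ * (1 - Real.exp (z y) / (Real.exp t + C)) := by
      intro t
      set u := Function.update z j t with hu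
      have huy : u y = z y := Function.update_of_ne (Ne.symm hj) _ _
      have hsmax : ∀ k, smax u k = Real.exp (u k) / (Real.exp t + C) := by
        intro k; rw [smax, hS t]
      have hsy : smax u y = Real.exp (z y) / (Real.exp t + C) := by rw [hsmax, huy]
      -- LCAL
      have h1 : LCAL y τ lam u
          = -Real.log (τ * (Real.exp (z y) / (Real.exp t + C) - 1) + 1) - lam * Real.log τ := by
        rw [LCAL, Finset.sum_eq_single y]
        · simp [hsy]
        · intro b _ hb; simp [hb]
        · intro h; exact absurd (Finset.mem_univ y) h
      -- LRC
      have hsum1 : (∑ k, smax u k) = 1 := by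
        rw [show (∑ k, smax u k) = (∑ k, Real.exp (u k)) / (Real.exp t + C) by
          rw [Finset.sum_div]; exact Finset.sum_congr rfl fun k _ => hsmax k]
        rw [hS t]
        exact div_self (hSpos t).ne'
      have h2 : LRC y A τ u = - (A * τ * (1 - Real.exp (z y) / (Real.exp t + C))) := by
        rw [LRC]
        have hterm : ∀ k : Fin K,
            (τ * (smax u k - (if k = y then (1:ℝ) else 0)) + (if k = y then (1:ℝ) else 0)) *
              logA A (if k = y then (1:ℝ) else 0)
            = τ * A * smax u k - (if k = y then τ * A * smax u y else 0) := by
          intro k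
          by_cases h : k = y
          · simp [h, logA]
          · simp [h, logA]; ring
        rw [Finset.sum_congr rfl fun k _ => hterm k, Finset.sum_sub_distrib,
          Finset.sum_ite_eq' Finset.univ y (fun _ => τ * A * smax u y), ← Finset.mul_sum,
          hsum1, if_pos (Finset.mem_univ y), hsy]
        ring
      rw [h1, h2]; ring
    -- derivative of the explicit function
    have hg : HasDerivAt (fun t => Real.exp (z y) / (Real.exp t + C))
        ((0 * (Real.exp (z j) + C) - Real.exp (z y) * Real.exp (z j)) / (Real.exp (z j) + C) ^ 2)
        (z j) :=
      (hasDerivAt_const _ _).div ((Real.hasDerivAt_exp _).add_const C) (hSpos (z j)).ne'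
    set S := Real.exp (z j) + C with hSdef
    set g' : ℝ := (0 * S - Real.exp (z y) * Real.exp (z j)) / S ^ 2 with hg'def
    have hpy_pos : 0 < Real.exp (z y) / S := div_pos (Real.exp_pos _) (hSpos (z j))
    have hpy_le : Real.exp (z y) / S ≤ 1 := (div_le_one (hSpos (z j))).2 hEy
    have hD : 0 < τ * (Real.exp (z y) / S - 1) + 1 := by nlinarith
    have hlog : HasDerivAt
        (fun t => Real.log (τ * (Real.exp (z y) / (Real.exp t + C) - 1) + 1))
        ((τ * g') / (τ * (Real.exp (z y) / S - 1) + 1)) (z j) :=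
      HasDerivAt.log (((hg.sub_const 1).const_mul τ).add_const 1) hD.ne'
    have hderiv : HasDerivAt
        (fun t => -Real.log (τ * (Real.exp (z y) / (Real.exp t + C) - 1) + 1)
          - lam * Real.log τ - A * τ * (1 - Real.exp (z y) / (Real.exp t + C)))
        (-((τ * g') / (τ * (Real.exp (z y) / S - 1) + 1)) - (A * τ) * (-g')) (z j) :=
      (hlog.neg.sub_const (lam * Real.log τ)).sub ((hg.const_sub 1).const_mul (A * τ))
    have heq : (fun t => LCAL y τ lam (Function.update z j t) + LRC y A τ (Function.update z j t))
        = fun t => -Real.log (τ * (Real.exp (z y) / (Real.exp t + C) - 1) + 1)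
          - lam * Real.log τ - A * τ * (1 - Real.exp (z y) / (Real.exp t + C)) :=
      funext hfun
    rw [heq]
    convert hderiv using 1
    have hsj : smax z j = Real.exp (z j) / S := by rw [smax, ← hEC]
    have hsyv : smax z y = Real.exp (z y) / S := by rw [smax, ← hEC]
    have hD2 : Real.exp (z y) / S - 1 + 1 / τ ≠ 0 := by
      have h : Real.exp (z y) / S - 1 + 1 / τ
          = (τ * (Real.exp (z y) / S - 1) + 1) / τ := by
        field_simp
      rw [h]
      positivity
    rw [hsj, hsyv, hg'def]
    exact alg_aux _ _ _ _ _ (hSpos (z j)).ne' hτ0.ne' hD.ne' hD2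
  · -- nonnegativity part
    intro pj hpj py hpy
    have h1 : (1:ℝ) < 1 / τ := one_lt_one_div hτ0 hτ1
    have hden : 0 < py - 1 + 1 / τ := by linarith [hpy.1]
    have h2 : 0 ≤ pj * py / (py - 1 + 1 / τ) :=
      div_nonneg (mul_nonneg hpj.1 hpy.1) hden.le
    have h3 : 0 ≤ -A * τ * (pj * py) :=
      mul_nonneg (mul_nonneg (neg_nonneg.2 hA.le) hτ0.le) (mul_nonneg hpj.1 hpy.1)
    nlinarith
end

section
/- Under symmetric label noise with rate η < (K-1)/K, the noisy risk of L_{r-cace} satisfies R^η(f) = (1 - ηK/(K-1))·R(f) + (η/(K-1))·E[∑_{j=1}^K L_{r-cace}(f(x), j)] for all classifiers f. -/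
open MeasureTheory

theorem noisy_risk_decomposition {Ω : Type*} [MeasurableSpace Ω]
    (μ : Measure Ω) [IsProbabilityMeasure μ]
    (K : ℕ) (hK : 2 ≤ K) (y : Ω → Fin K) (hy : Measurable y)
    (A : ℝ) (hA : A < 0)
    (τ : Ω → ℝ) (hτ : ∀ ω, τ ω ∈ Set.Ioo (0:ℝ) 1)
    (p : Ω → Fin K → ℝ) (hp0 : ∀ ω j, 0 ≤ p ω j) (hp1 : ∀ ω, ∑ j, p ω j = 1)
    (η : ℝ) (hη0 : 0 ≤ η) (hη : η < ((K : ℝ) - 1) / K)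
    (L : Ω → Fin K → ℝ) (hL : ∀ ω j, L ω j = -A * τ ω * (1 - p ω j))
    (hInt : ∀ j, Integrable (fun ω => L ω j) μ)
    (hInty : Integrable (fun ω => L ω (y ω)) μ) :
    ∫ ω, ((1 - η) * L ω (y ω)
        + (η / ((K : ℝ) - 1)) * ∑ j ∈ Finset.univ.erase (y ω), L ω j) ∂μ
      = (1 - η * K / ((K : ℝ) - 1)) * ∫ ω, L ω (y ω) ∂μ
        + (η / ((K : ℝ) - 1)) * ∫ ω, (∑ j, L ω j) ∂μ := by
  have hK1 : ((K : ℝ) - 1) ≠ 0 := by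
    have : (2 : ℝ) ≤ K := by exact_mod_cast hK
    linarith
  have hS : Integrable (fun ω => ∑ j, L ω j) μ :=
    integrable_finset_sum _ (fun j _ => hInt j)
  have heq : ∀ ω, (1 - η) * L ω (y ω)
      + (η / ((K : ℝ) - 1)) * ∑ j ∈ Finset.univ.erase (y ω), L ω j
      = (1 - η * K / ((K : ℝ) - 1)) * L ω (y ω)
        + (η / ((K : ℝ) - 1)) * ∑ j, L ω j := by
    intro ω
    rw [Finset.sum_erase_eq_sub (Finset.mem_univ (y ω))]
    field_simp
    ring
  calc ∫ ω, ((1 - η) * L ω (y ω)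
        + (η / ((K : ℝ) - 1)) * ∑ j ∈ Finset.univ.erase (y ω), L ω j) ∂μ
      = ∫ ω, ((1 - η * K / ((K : ℝ) - 1)) * L ω (y ω)
        + (η / ((K : ℝ) - 1)) * ∑ j, L ω j) ∂μ := by
        exact integral_congr_ae (Filter.Eventually.of_forall heq)
    _ = (1 - η * K / ((K : ℝ) - 1)) * ∫ ω, L ω (y ω) ∂μ
        + (η / ((K : ℝ) - 1)) * ∫ ω, (∑ j, L ω j) ∂μ := by
        rw [integral_add (hInty.const_mul _) (hS.const_mul _),
          MeasureTheory.integral_const_mul, MeasureTheory.integral_const_mul]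
end

section
/- Under symmetric label noise with rate η < (K-1)/K, if f* minimizes the clean risk R and f*_η minimizes the noisy risk R^η of L_{r-cace}, then 0 ≤ R(f*_η) - R(f*) < -Aη(K-1)/(K(1-η)-1). -/
open MeasureTheory

theorem symmetric_noise_clean_risk_bound {Ω F : Type*} [MeasurableSpace Ω]
    (μ : Measure Ω) [IsProbabilityMeasure μ]
    (K : ℕ) (hK : 2 ≤ K) (y : Ω → Fin K) (hy : Measurable y)
    (A : ℝ) (hA : A < 0)
    (τ : Ω → ℝ) (hτ : ∀ ω, τ ω ∈ Set.Ioo (0:ℝ) 1)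
    (p : F → Ω → Fin K → ℝ) (hp0 : ∀ f ω j, 0 ≤ p f ω j)
    (hp1 : ∀ f ω, ∑ j, p f ω j = 1)
    (η : ℝ) (hη0 : 0 < η) (hη : η < ((K : ℝ) - 1) / K)
    (L : F → Ω → Fin K → ℝ) (hL : ∀ f ω j, L f ω j = -A * τ ω * (1 - p f ω j))
    (hInt : ∀ f j, Integrable (fun ω => L f ω j) μ)
    (hInty : ∀ f, Integrable (fun ω => L f ω (y ω)) μ)
    (R Rη : F → ℝ)
    (hR : ∀ f, R f = ∫ ω, L f ω (y ω) ∂μ)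
    (hRη : ∀ f, Rη f = ∫ ω, ((1 - η) * L f ω (y ω)
        + (η / ((K : ℝ) - 1)) * ∑ j ∈ Finset.univ.erase (y ω), L f ω j) ∂μ)
    (fstar feta : F)
    (hfstar : ∀ f, R fstar ≤ R f) (hfeta : ∀ f, Rη feta ≤ Rη f) :
    0 ≤ R feta - R fstar
    ∧ R feta - R fstar < -A * η * ((K : ℝ) - 1) / ((K : ℝ) * (1 - η) - 1) := by
  have hK2 : (2:ℝ) ≤ (K:ℝ) := by exact_mod_cast hK
  have hKm1 : (0:ℝ) < (K:ℝ) - 1 := by linarith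
  have hKpos : (0:ℝ) < (K:ℝ) := by linarith
  have hηK : η * K < (K:ℝ) - 1 := (lt_div_iff₀ hKpos).mp hη
  -- total sum of losses is independent of f
  have hsum : ∀ f ω, ∑ j, L f ω j = -A * τ ω * ((K:ℝ) - 1) := by
    intro f ω
    simp only [hL]
    rw [← Finset.mul_sum, Finset.sum_sub_distrib, hp1, Finset.sum_const,
      Finset.card_univ, Fintype.card_fin, nsmul_eq_mul, mul_one]
  set ψ : ℝ := 1 - η * K / ((K:ℝ) - 1) with hψdef
  have hψpos : 0 < ψ := by
    rw [hψdef, sub_pos, div_lt_one hKm1]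
    exact hηK
  have hcint : Integrable (fun ω => (η / ((K:ℝ) - 1)) * (-A * τ ω * ((K:ℝ) - 1))) μ := by
    have : Integrable (fun ω => ∑ j, L feta ω j) μ :=
      integrable_finset_sum _ (fun j _ => hInt feta j)
    have h2 : Integrable (fun ω => -A * τ ω * ((K:ℝ) - 1)) μ := by
      simpa [hsum] using this
    exact h2.const_mul _
  have key : ∀ f, Rη f = ψ * R f + ∫ ω, (η / ((K:ℝ) - 1)) * (-A * τ ω * ((K:ℝ) - 1)) ∂μ := by
    intro f
    rw [hRη, hR]
    have heq : ∀ ω, (1 - η) * L f ω (y ω)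
        + (η / ((K:ℝ) - 1)) * ∑ j ∈ Finset.univ.erase (y ω), L f ω j
        = ψ * L f ω (y ω) + (η / ((K:ℝ) - 1)) * (-A * τ ω * ((K:ℝ) - 1)) := by
      intro ω
      have herase : ∑ j ∈ Finset.univ.erase (y ω), L f ω j
          = -A * τ ω * ((K:ℝ) - 1) - L f ω (y ω) := by
        have := Finset.add_sum_erase Finset.univ (L f ω) (Finset.mem_univ (y ω))
        rw [← hsum f ω]
        linarith [this]
      rw [herase, hψdef]
      field_simp
      ring
    rw [integral_congr_ae (Filter.Eventually.of_forall heq),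
      integral_add ((hInty f).const_mul ψ) hcint, integral_const_mul]
  have hle : R feta ≤ R fstar := by
    have h := hfeta fstar
    rw [key feta, key fstar] at h
    have h2 : ψ * R feta ≤ ψ * R fstar := by
      exact le_of_add_le_add_right h
    exact le_of_mul_le_mul_left h2 hψpos
  have heq : R feta = R fstar := le_antisymm hle (hfstar feta)
  constructor
  · linarith
  · rw [heq, sub_self]
    have hden : 0 < (K:ℝ) * (1 - η) - 1 := by nlinarith
    have hnum : 0 < -A * η * ((K:ℝ) - 1) :=
      mul_pos (mul_pos (neg_pos.mpr hA) hη0) hKm1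
    exact div_pos hnum hden
end

section
/- Under symmetric label noise with rate η < (K-1)/K, if f* minimizes the clean risk R and f*_η minimizes the noisy risk R^η of L_{r-cace}, then Aη < R^η(f*_η) - R^η(f*) ≤ 0. -/
open MeasureTheory

theorem symmetric_noise_noisy_risk_bound {Ω F : Type*} [MeasurableSpace Ω]
    (μ : Measure Ω) [IsProbabilityMeasure μ]
    (K : ℕ) (hK : 2 ≤ K) (y : Ω → Fin K) (hy : Measurable y)
    (A : ℝ) (hA : A < 0)
    (τ : Ω → ℝ) (hτ : ∀ ω, τ ω ∈ Set.Ioo (0:ℝ) 1)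
    (p : F → Ω → Fin K → ℝ) (hp0 : ∀ f ω j, 0 ≤ p f ω j)
    (hp1 : ∀ f ω, ∑ j, p f ω j = 1)
    (η : ℝ) (hη0 : 0 < η) (hη : η < ((K : ℝ) - 1) / K)
    (L : F → Ω → Fin K → ℝ) (hL : ∀ f ω j, L f ω j = -A * τ ω * (1 - p f ω j))
    (hInt : ∀ f j, Integrable (fun ω => L f ω j) μ)
    (hInty : ∀ f, Integrable (fun ω => L f ω (y ω)) μ)
    (R Rη : F → ℝ)
    (hR : ∀ f, R f = ∫ ω, L f ω (y ω) ∂μ)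
    (hRη : ∀ f, Rη f = ∫ ω, ((1 - η) * L f ω (y ω)
        + (η / ((K : ℝ) - 1)) * ∑ j ∈ Finset.univ.erase (y ω), L f ω j) ∂μ)
    (fstar feta : F)
    (hfstar : ∀ f, R fstar ≤ R f) (hfeta : ∀ f, Rη feta ≤ Rη f) :
    A * η < Rη feta - Rη fstar ∧ Rη feta - Rη fstar ≤ 0 := by
  have hK2 : (2:ℝ) ≤ (K:ℝ) := by exact_mod_cast hK
  have hKpos : (0:ℝ) < (K:ℝ) - 1 := by linarith
  have hKp : (0:ℝ) < (K:ℝ) := by linarith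
  set c : ℝ := 1 - η - η / ((K:ℝ) - 1) with hc
  have hηK : η * (K:ℝ) < (K:ℝ) - 1 := (lt_div_iff₀ hKp).mp hη
  have hcpos : 0 < c := by
    have h2 : η / ((K:ℝ) - 1) < 1 - η := by
      rw [div_lt_iff₀ hKpos]; nlinarith
    rw [hc]; linarith
  have hsum : ∀ f ω, ∑ j, L f ω j = (-A) * τ ω * ((K:ℝ) - 1) := by
    intro f ω
    simp only [hL]
    rw [← Finset.mul_sum]
    congr 1
    rw [Finset.sum_sub_distrib, hp1, Finset.sum_const, Finset.card_univ,
      Fintype.card_fin]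
    simp
  have hSint : Integrable (fun ω => (-A) * τ ω * ((K:ℝ) - 1)) μ :=
    (integrable_finset_sum Finset.univ fun j _ => hInt fstar j).congr
      (Filter.Eventually.of_forall fun ω => hsum fstar ω)
  have key : ∀ f, Rη f = c * R f
      + (η / ((K:ℝ) - 1)) * ∫ ω, (-A) * τ ω * ((K:ℝ) - 1) ∂μ := by
    intro f
    rw [hRη, hR]
    have heq : ∀ ω, (1 - η) * L f ω (y ω)
        + (η / ((K:ℝ) - 1)) * ∑ j ∈ Finset.univ.erase (y ω), L f ω j
        = c * L f ω (y ω) + (η / ((K:ℝ) - 1)) * ((-A) * τ ω * ((K:ℝ) - 1)) := by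
      intro ω
      rw [Finset.sum_erase_eq_sub (Finset.mem_univ (y ω)), hsum f ω, hc]
      ring
    simp_rw [heq]
    rw [integral_add ((hInty f).const_mul c) (hSint.const_mul _),
      integral_const_mul, integral_const_mul]
  have hdiff : Rη feta - Rη fstar = c * (R feta - R fstar) := by
    rw [key feta, key fstar]; ring
  constructor
  · have h1 : 0 ≤ Rη feta - Rη fstar := by
      rw [hdiff]
      exact mul_nonneg hcpos.le (sub_nonneg.2 (hfstar feta))
    have h2 : A * η < 0 := mul_neg_of_neg_of_pos hA hη0
    linarith
  · linarith [hfeta fstar]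
end

section
/- Under class-dependent label noise with η_{yj} < 1 - η_y for all j ≠ y, if the clean-risk minimizer f* of L_{r-cace} achieves zero clean risk, then 0 ≤ R^η(f*) - R^η(f*_η) < A(1-K)·E_{D(x,y)}[1 - η_y], where f*_η minimizes the noisy risk. -/
open MeasureTheory

theorem asymmetric_noise_risk_bound {Ω F : Type*} [MeasurableSpace Ω]
    (μ : Measure Ω) [IsProbabilityMeasure μ]
    (K : ℕ) (hK : 2 ≤ K) (y : Ω → Fin K) (hy : Measurable y)
    (A : ℝ) (hA : A < 0)
    (τ : Ω → ℝ) (hτ : ∀ ω, τ ω ∈ Set.Ioo (0:ℝ) 1)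
    (p : F → Ω → Fin K → ℝ) (hp0 : ∀ f ω j, 0 ≤ p f ω j)
    (hp1 : ∀ f ω, ∑ j, p f ω j = 1)
    (ηm : Fin K → Fin K → ℝ) (ηv : Fin K → ℝ)
    (hηm0 : ∀ i j, 0 ≤ ηm i j)
    (hsum : ∀ i, ∑ j ∈ Finset.univ.erase i, ηm i j = ηv i)
    (hb : ∀ i j, j ≠ i → ηm i j < 1 - ηv i)
    (L : F → Ω → Fin K → ℝ) (hL : ∀ f ω j, L f ω j = -A * τ ω * (1 - p f ω j))
    (hInt : ∀ f j, Integrable (fun ω => L f ω j) μ)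
    (hInty : ∀ f, Integrable (fun ω => L f ω (y ω)) μ)
    (R Rη : F → ℝ)
    (hR : ∀ f, R f = ∫ ω, L f ω (y ω) ∂μ)
    (hRη : ∀ f, Rη f = ∫ ω, ((1 - ηv (y ω)) * L f ω (y ω)
        + ∑ j ∈ Finset.univ.erase (y ω), ηm (y ω) j * L f ω j) ∂μ)
    (fstar feta : F)
    (hfstar : ∀ f, R fstar ≤ R f) (hRstar : R fstar = 0)
    (hfeta : ∀ f, Rη feta ≤ Rη f) :
    0 ≤ Rη fstar - Rη feta
    ∧ Rη fstar - Rη feta < A * (1 - (K : ℝ)) * ∫ ω, (1 - ηv (y ω)) ∂μ := by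
  have hηv : ∀ i : Fin K, 0 < 1 - ηv i := by
    intro i
    obtain ⟨j, hj⟩ := Fintype.exists_ne_of_one_lt_card (by simp; omega) i
    exact lt_of_le_of_lt (hηm0 i j) (hb i j hj)
  have hple : ∀ f ω j, p f ω j ≤ 1 := by
    intro f ω j
    calc p f ω j ≤ ∑ j, p f ω j :=
          Finset.single_le_sum (fun j _ => hp0 f ω j) (Finset.mem_univ j)
      _ = 1 := hp1 f ω
  have hLnn : ∀ f ω j, 0 ≤ L f ω j := by
    intro f ω j; rw [hL]
    have h1 := (hτ ω).1
    have h2 := hple f ω j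
    have : (0:ℝ) ≤ -A := by linarith
    exact mul_nonneg (mul_nonneg this h1.le) (by linarith)
  -- integrability helper
  have hmul : ∀ (g : Fin K → ℝ) (h : Ω → ℝ), Integrable h μ →
      Integrable (fun ω => g (y ω) * h ω) μ := by
    intro g h hh
    refine hh.bdd_mul (c := ∑ i, ‖g i‖) ((measurable_from_top.comp hy).aestronglyMeasurable) ?_
    refine Filter.Eventually.of_forall fun ω => ?_
    exact Finset.single_le_sum (f := fun i => ‖g i‖) (fun i _ => norm_nonneg _)
      (Finset.mem_univ (y ω))
  -- rewrite integrand in a sum-over-univ form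
  have hrw : ∀ f ω, (1 - ηv (y ω)) * L f ω (y ω)
      + ∑ j ∈ Finset.univ.erase (y ω), ηm (y ω) j * L f ω j
      = (1 - ηv (y ω)) * L f ω (y ω)
      + ∑ j, (if j = y ω then 0 else ηm (y ω) j) * L f ω j := by
    intro f ω
    congr 1
    have h1 : ∑ j ∈ Finset.univ.erase (y ω), ηm (y ω) j * L f ω j
        = ∑ j ∈ Finset.univ.erase (y ω), (if j = y ω then 0 else ηm (y ω) j) * L f ω j :=
      Finset.sum_congr rfl fun j hj => by rw [if_neg (Finset.ne_of_mem_erase hj)]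
    rw [h1, Finset.sum_erase _ (by simp)]
  have hGint : ∀ f, Integrable (fun ω => (1 - ηv (y ω)) * L f ω (y ω)
      + ∑ j ∈ Finset.univ.erase (y ω), ηm (y ω) j * L f ω j) μ := by
    intro f
    have : (fun ω => (1 - ηv (y ω)) * L f ω (y ω)
        + ∑ j ∈ Finset.univ.erase (y ω), ηm (y ω) j * L f ω j)
        = fun ω => (1 - ηv (y ω)) * L f ω (y ω)
        + ∑ j, (if j = y ω then 0 else ηm (y ω) j) * L f ω j := funext fun ω => hrw f ω
    rw [this]
    refine (hmul (fun i => 1 - ηv i) _ (hInty f)).add ?_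
    refine integrable_finset_sum _ fun j _ => ?_
    exact hmul (fun i => if j = i then 0 else ηm i j) _ (hInt f j)
  -- pointwise strict bound for the fstar integrand
  have hGH : ∀ ω, (1 - ηv (y ω)) * L fstar ω (y ω)
      + ∑ j ∈ Finset.univ.erase (y ω), ηm (y ω) j * L fstar ω j
      < (-A * ((K:ℝ) - 1)) * (1 - ηv (y ω)) := by
    intro ω
    set i := y ω with hi
    obtain ⟨ht0, ht1⟩ := hτ ω
    have hBsum : (1 - p fstar ω i) + ∑ j ∈ Finset.univ.erase i, (1 - p fstar ω j)
        = (K:ℝ) - 1 := by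
      have h1 : ∑ j, (1 - p fstar ω j) = (K:ℝ) - 1 := by
        rw [Finset.sum_sub_distrib, hp1]
        simp
      have h2 := Finset.add_sum_erase Finset.univ (fun j => 1 - p fstar ω j) (Finset.mem_univ i)
      rw [h1] at h2
      linarith
    have hGeq : (1 - ηv i) * L fstar ω i + ∑ j ∈ Finset.univ.erase i, ηm i j * L fstar ω j
        = (-A * τ ω) * ((1 - ηv i) * (1 - p fstar ω i)
          + ∑ j ∈ Finset.univ.erase i, ηm i j * (1 - p fstar ω j)) := by
      rw [mul_add, Finset.mul_sum, hL]
      congr 1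
      · ring
      · refine Finset.sum_congr rfl fun j _ => ?_
        rw [hL]; ring
    set B := (1 - ηv i) * (1 - p fstar ω i)
        + ∑ j ∈ Finset.univ.erase i, ηm i j * (1 - p fstar ω j) with hB
    have hBle : B ≤ (1 - ηv i) * ((K:ℝ) - 1) := by
      have hs : ∑ j ∈ Finset.univ.erase i, ηm i j * (1 - p fstar ω j)
          ≤ ∑ j ∈ Finset.univ.erase i, (1 - ηv i) * (1 - p fstar ω j) := by
        refine Finset.sum_le_sum fun j hj => ?_
        have hj' := Finset.ne_of_mem_erase hj
        exact mul_le_mul_of_nonneg_right (le_of_lt (hb i j hj'))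
          (by have := hple fstar ω j; linarith)
      calc B ≤ (1 - ηv i) * (1 - p fstar ω i)
            + ∑ j ∈ Finset.univ.erase i, (1 - ηv i) * (1 - p fstar ω j) := by
              rw [hB]; linarith
        _ = (1 - ηv i) * ((1 - p fstar ω i)
            + ∑ j ∈ Finset.univ.erase i, (1 - p fstar ω j)) := by
              rw [mul_add, Finset.mul_sum]
        _ = (1 - ηv i) * ((K:ℝ) - 1) := by rw [hBsum]
    rw [hGeq]
    have hC : 0 < (1 - ηv i) * ((K:ℝ) - 1) := by
      have : (1:ℝ) ≤ (K:ℝ) - 1 := by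
        have : (2:ℝ) ≤ (K:ℝ) := by exact_mod_cast hK
        linarith
      nlinarith [hηv i]
    have h1 : (-A * τ ω) * B ≤ (-A * τ ω) * ((1 - ηv i) * ((K:ℝ) - 1)) :=
      mul_le_mul_of_nonneg_left hBle (by nlinarith)
    have h2 : (-A * τ ω) * ((1 - ηv i) * ((K:ℝ) - 1))
        < (-A * 1) * ((1 - ηv i) * ((K:ℝ) - 1)) := by
      have : -A * τ ω < -A * 1 := by nlinarith
      exact mul_lt_mul_of_pos_right this hC
    calc (-A * τ ω) * B ≤ _ := h1
      _ < (-A * 1) * ((1 - ηv i) * ((K:ℝ) - 1)) := h2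
      _ = (-A * ((K:ℝ) - 1)) * (1 - ηv i) := by ring
  -- integrability of H and the strict integral inequality
  have hHint : Integrable (fun ω => (-A * ((K:ℝ) - 1)) * (1 - ηv (y ω))) μ := by
    have := hmul (fun i => (-A * ((K:ℝ) - 1)) * (1 - ηv i)) (fun _ => (1:ℝ))
      (integrable_const 1)
    simpa using this
  have hstrict : Rη fstar < ∫ ω, (-A * ((K:ℝ) - 1)) * (1 - ηv (y ω)) ∂μ := by
    rw [hRη]
    have hpos : 0 < ∫ ω, ((-A * ((K:ℝ) - 1)) * (1 - ηv (y ω))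
        - ((1 - ηv (y ω)) * L fstar ω (y ω)
          + ∑ j ∈ Finset.univ.erase (y ω), ηm (y ω) j * L fstar ω j)) ∂μ := by
      rw [integral_pos_iff_support_of_nonneg
        (fun ω => sub_nonneg.2 (hGH ω).le) (hHint.sub (hGint fstar))]
      have : Function.support (fun ω => (-A * ((K:ℝ) - 1)) * (1 - ηv (y ω))
          - ((1 - ηv (y ω)) * L fstar ω (y ω)
            + ∑ j ∈ Finset.univ.erase (y ω), ηm (y ω) j * L fstar ω j)) = Set.univ := by
        ext ω
        simp only [Function.mem_support, Set.mem_univ, iff_true]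
        exact sub_ne_zero.2 (hGH ω).ne'
      rw [this]
      simp
    rw [integral_sub hHint (hGint fstar)] at hpos
    linarith
  -- Rη feta ≥ 0
  have hfeta0 : 0 ≤ Rη feta := by
    rw [hRη]
    refine integral_nonneg fun ω => ?_
    have h1 : 0 ≤ (1 - ηv (y ω)) * L feta ω (y ω) :=
      mul_nonneg (le_of_lt (hηv _)) (hLnn _ _ _)
    have h2 : 0 ≤ ∑ j ∈ Finset.univ.erase (y ω), ηm (y ω) j * L feta ω j :=
      Finset.sum_nonneg fun j _ => mul_nonneg (hηm0 _ _) (hLnn _ _ _)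
    exact add_nonneg h1 h2
  have hle : Rη feta ≤ Rη fstar := hfeta fstar
  constructor
  · linarith
  · have hIc : ∫ ω, (-A * ((K:ℝ) - 1)) * (1 - ηv (y ω)) ∂μ
        = A * (1 - (K:ℝ)) * ∫ ω, (1 - ηv (y ω)) ∂μ := by
      rw [integral_const_mul]
      ring_nf
    rw [hIc] at hstrict
    linarith
end
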